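/- arXiv:1603.00076 — 4 statements merged into one kernel-verified Lean document; each statement's English description precedes it below -/
import Mathlib

section
/- If α ∈ (0,1) is irrational with continued fraction partial quotients a_i = ⌈(i+10)(log i)²⌉ for all i ≥ 2, then the series ∑_{k=1}^∞ 2‖q_k α‖ converges and its sum is less than 1. -/
/-!
Write `θ_n` for the Gauss iterates of `α`, so that `1/θ_n = a_{n+1} + θ_{n+1}`. The convergent
recursion then gives `q_n α - p_n = (-1)^n θ_0 θ_1 ⋯ θ_n`, hence `‖q_n α‖ ≤ θ_0 ⋯ θ_n`, while
`θ_n ≤ 1/a_{n+1}`. Here `a_2 = ⌈12 (log 2)²⌉ = 6` and `a_i ≥ 2` for `i ≥ 3`, so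
`2‖q_{k+1} α‖ ≤ (1/3) 2^{-k}`, whose sum is `2/3`.
-/

open Filter MeasureTheory

/-- Distance from a real number to the nearest integer. -/
noncomputable def nd (x : ℝ) : ℝ := |x - round x|

/-- Iterates of the Gauss map starting at `α`. -/
noncomputable def gaussIter (α : ℝ) : ℕ → ℝ
  | 0 => α
  | n + 1 => Int.fract (1 / gaussIter α n)

/-- `pq α k` is the partial quotient `a_{k+1}` of the continued fraction of `α ∈ (0,1)`. -/
noncomputable def pq (α : ℝ) (k : ℕ) : ℕ := (⌊1 / gaussIter α k⌋).toNat

/-- The continued fraction denominators `q_k` of `α`: `q_0 = 1`, `q_1 = a_1`,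
`q_{k+1} = a_{k+1} q_k + q_{k-1}`. -/
noncomputable def qd (α : ℝ) : ℕ → ℕ
  | 0 => 1
  | 1 => pq α 0
  | n + 2 => pq α (n + 1) * qd α (n + 1) + qd α n

noncomputable def pnum (α : ℝ) : ℕ → ℕ
  | 0 => 0
  | 1 => 1
  | n + 2 => pq α (n + 1) * pnum α (n + 1) + pnum α n

noncomputable def gaussProd (α : ℝ) (n : ℕ) : ℝ := ∏ i ∈ Finset.range (n + 1), gaussIter α i

section GaussIter

variable {α : ℝ}

lemma gaussIter_nonneg (h0 : 0 ≤ α) : ∀ n, 0 ≤ gaussIter α n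
  | 0 => h0
  | _ + 1 => Int.fract_nonneg _

lemma irrational_gaussIter (hirr : Irrational α) : ∀ n, Irrational (gaussIter α n)
  | 0 => hirr
  | n + 1 => by
    rw [gaussIter, Int.fract, one_div]
    exact (irrational_gaussIter hirr n).inv.sub_intCast _

lemma gaussIter_pos (hirr : Irrational α) (h0 : 0 ≤ α) (n : ℕ) : 0 < gaussIter α n :=
  (gaussIter_nonneg h0 n).lt_of_ne (irrational_gaussIter hirr n).ne_zero.symm

lemma pq_eq_floor {n : ℕ} (h : 0 ≤ gaussIter α n) : (pq α n : ℝ) = ⌊1 / gaussIter α n⌋ := by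
  rw [pq, ← Int.cast_natCast, Int.toNat_of_nonneg (Int.floor_nonneg.2 (by positivity))]

lemma pq_add_gaussIter_succ {n : ℕ} (h : 0 ≤ gaussIter α n) :
    (pq α n : ℝ) + gaussIter α (n + 1) = 1 / gaussIter α n := by
  rw [pq_eq_floor h, gaussIter, Int.floor_add_fract]

lemma pq_mul_gaussIter_le_one {n : ℕ} (h : 0 ≤ gaussIter α n) :
    (pq α n : ℝ) * gaussIter α n ≤ 1 := by
  rcases h.eq_or_lt with h' | h'
  · simp [← h']
  · rw [← le_div_iff₀ h', pq_eq_floor h]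
    exact Int.floor_le _

lemma gaussIter_le_of_le_pq {n : ℕ} {m : ℝ} (h : 0 ≤ gaussIter α n) (hm : 0 < m)
    (hpq : m ≤ pq α n) : gaussIter α n ≤ 1 / m := by
  rw [le_div_iff₀ hm]
  nlinarith [pq_mul_gaussIter_le_one h]

lemma gaussProd_zero : gaussProd α 0 = α := by
  simp [gaussProd, gaussIter]

lemma gaussProd_succ (n : ℕ) : gaussProd α (n + 1) = gaussProd α n * gaussIter α (n + 1) :=
  Finset.prod_range_succ _ _

lemma gaussProd_nonneg (h0 : 0 ≤ α) (n : ℕ) : 0 ≤ gaussProd α n :=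
  Finset.prod_nonneg fun i _ => gaussIter_nonneg h0 i

lemma qd_mul_sub_pnum (hirr : Irrational α) (h0 : 0 ≤ α) :
    ∀ n, (qd α n : ℝ) * α - pnum α n = (-1) ^ n * gaussProd α n
  | 0 => by simp [qd, pnum, gaussProd, gaussIter]
  | 1 => by
    have hθ := pq_add_gaussIter_succ (n := 0) h0
    have hα := (gaussIter_pos hirr h0 0).ne'
    simp only [gaussIter] at hθ hα
    rw [gaussProd_succ, gaussProd_zero]
    simp only [qd, pnum, gaussIter, Nat.cast_one]
    field_simp at hθ
    linear_combination hθ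
  | n + 2 => by
    have ih₀ := qd_mul_sub_pnum hirr h0 n
    have ih₁ := qd_mul_sub_pnum hirr h0 (n + 1)
    have hθ := pq_add_gaussIter_succ (gaussIter_nonneg h0 (n + 1))
    have hne := (gaussIter_pos hirr h0 (n + 1)).ne'
    rw [gaussProd_succ] at ih₁
    rw [gaussProd_succ, gaussProd_succ]
    field_simp at hθ
    simp only [qd, pnum, Nat.cast_add, Nat.cast_mul]
    linear_combination (pq α (n + 1) : ℝ) * ih₁ + ih₀ - (-1) ^ n * gaussProd α n * hθ

lemma nd_qd_mul_le_gaussProd (hirr : Irrational α) (h0 : 0 ≤ α) (n : ℕ) :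
    nd ((qd α n : ℝ) * α) ≤ gaussProd α n :=
  calc nd ((qd α n : ℝ) * α) ≤ |(qd α n : ℝ) * α - ((pnum α n : ℤ) : ℝ)| := round_le _ _
    _ = gaussProd α n := by
      rw [Int.cast_natCast, qd_mul_sub_pnum hirr h0, abs_mul, abs_neg_one_pow, one_mul,
        abs_of_nonneg (gaussProd_nonneg h0 n)]

lemma gaussProd_succ_le (h0 : 0 ≤ α) (h1 : α ≤ 1) {c r : ℝ} (hc : gaussIter α 1 ≤ c)
    (hr : ∀ k, 2 ≤ k → gaussIter α k ≤ r) : ∀ k, gaussProd α (k + 1) ≤ c * r ^ k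
  | 0 => by
    rw [gaussProd_succ, gaussProd_zero, pow_zero, mul_one]
    calc α * gaussIter α 1 ≤ 1 * c := mul_le_mul h1 hc (gaussIter_nonneg h0 1) zero_le_one
      _ = c := one_mul c
  | k + 1 => by
    have ih := gaussProd_succ_le h0 h1 hc hr k
    rw [gaussProd_succ, pow_succ, ← mul_assoc]
    exact mul_le_mul ih (hr _ (by omega)) (gaussIter_nonneg h0 _)
      ((gaussProd_nonneg h0 _).trans ih)

end GaussIter

lemma six_le_ceil_twelve_mul_log_two_sq : (6 : ℤ) ≤ ⌈((2 : ℝ) + 10) * Real.log 2 ^ 2⌉ := by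
  rw [Int.le_ceil_iff]
  push_cast
  nlinarith [Real.log_two_gt_d9]

lemma two_le_ceil_add_ten_mul_log_sq {x : ℝ} (hx : 3 ≤ x) :
    (2 : ℤ) ≤ ⌈(x + 10) * Real.log x ^ 2⌉ := by
  have hlog : 1 < Real.log x := by
    rw [Real.lt_log_iff_exp_lt (by linarith)]
    linarith [Real.exp_one_lt_d9]
  rw [Int.le_ceil_iff]
  push_cast
  nlinarith

theorem stmt2 (α : ℝ) (hirr : Irrational α) (h0 : 0 < α) (h1 : α < 1)
    (ha : ∀ i : ℕ, 2 ≤ i → (pq α (i - 1) : ℤ) = ⌈((i : ℝ) + 10) * Real.log i ^ 2⌉) :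
    Summable (fun k : ℕ => 2 * nd ((qd α (k + 1) : ℝ) * α)) ∧
      ∑' k : ℕ, 2 * nd ((qd α (k + 1) : ℝ) * α) < 1 := by
  have hpq₁ : (6 : ℝ) ≤ pq α 1 := by
    have h := ha 2 le_rfl
    push_cast at h
    exact_mod_cast h ▸ six_le_ceil_twelve_mul_log_two_sq
  have hpq : ∀ k, 2 ≤ k → (2 : ℝ) ≤ pq α k := fun k hk => by
    have h := ha (k + 1) (by omega)
    rw [Nat.add_sub_cancel] at h
    exact_mod_cast h ▸ two_le_ceil_add_ten_mul_log_sq (by exact_mod_cast (by omega : 3 ≤ k + 1))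
  have hθ₁ : gaussIter α 1 ≤ 1 / 6 :=
    gaussIter_le_of_le_pq (gaussIter_nonneg h0.le 1) (by norm_num) hpq₁
  have hθ : ∀ k, 2 ≤ k → gaussIter α k ≤ 1 / 2 := fun k hk =>
    gaussIter_le_of_le_pq (gaussIter_nonneg h0.le k) two_pos (hpq k hk)
  have hbound : ∀ k : ℕ, 2 * nd ((qd α (k + 1) : ℝ) * α) ≤ 1 / 3 * (1 / 2) ^ k := fun k => by
    have := (nd_qd_mul_le_gaussProd hirr h0.le (k + 1)).trans
      (gaussProd_succ_le h0.le h1.le hθ₁ hθ k)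
    linarith
  have hgeom : HasSum (fun k : ℕ => 1 / 3 * (1 / 2 : ℝ) ^ k) (1 / 3 * 2) :=
    hasSum_geometric_two.mul_left _
  have hsum : Summable (fun k : ℕ => 2 * nd ((qd α (k + 1) : ℝ) * α)) :=
    .of_nonneg_of_le (fun _ => mul_nonneg zero_le_two (abs_nonneg _)) hbound hgeom.summable
  refine ⟨hsum, (hsum.tsum_le_tsum hbound hgeom.summable).trans_lt ?_⟩
  rw [hgeom.tsum_eq]
  norm_num
end

section
/- Let δ : [0,∞) → (0,∞) and suppose there exist constants M ≥ 1, ε ∈ (0, 1/8), and t₀ ≥ 2 such that for every t ≥ t₀ there exists u ∈ [t, t + M log t] with δ(u) > u^{−1/2 + ε}, and such that δ is 1-Lipschitz in the sense that |log δ(s) − log δ(u)| ≤ |s − u| for all s, u. Then the set S = { s : δ(s) > s^{−1/2 + ε/4} } has positive lower density, i.e., liminf_{T→∞} |S ∩ [0,T]|/T > 0. -/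
/-!
For `t ≥ t₀` take `u ∈ [t, t + M log t]` with `δ u > u ^ (-1/2 + ε)`. As `log δ` is 1-Lipschitz,
`δ s > s ^ (-1/2 + ε/4)` on `[u, u + (ε/2) log t]`: the loss `(ε/2) log t` in `log δ` is at most
`(3ε/4) log u`, the gap between the two exponents. So every window `(t, t + K log t]`, `K = M + 1`,
meets `S` in measure at least the fraction `ε / (2K)` of its length. Chaining the windows
`tₙ₊₁ = tₙ + K log tₙ`, the last `tₙ ≤ T` satisfies `T - tₙ < K log T = o(T)`, hence
`|S ∩ [0, T]| ≥ ε T / (4K)` for large `T`.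
-/

open Filter MeasureTheory Set Real

theorem rpow_lt_of_abs_log_sub_le {δ : ℝ → ℝ} {α β u s : ℝ} (hδs : 0 < δ s)
    (hlip : |log (δ s) - log (δ u)| ≤ |s - u|) (hβ : β ≤ 0) (hu : 0 < u) (hδu : u ^ α < δ u)
    (hus : u ≤ s) (hsu : s - u ≤ (α - β) * log u) : s ^ β < δ s := by
  have hs : 0 < s := hu.trans_le hus
  have hδu' : α * log u < log (δ u) := by
    rw [← log_rpow hu]
    exact log_lt_log (rpow_pos_of_pos hu α) hδu
  have hδs' : log (δ u) - (s - u) ≤ log (δ s) := by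
    rw [abs_of_nonneg (sub_nonneg.2 hus)] at hlip
    linarith [neg_abs_le (log (δ s) - log (δ u))]
  have hlog : β * log s ≤ β * log u := mul_le_mul_of_nonpos_left (log_le_log hu hus) hβ
  rw [← exp_log hδs, rpow_def_of_pos hs, mul_comm]
  exact exp_lt_exp.2 (by linarith)

theorem measure_inter_Ioc_add_measure_inter_Ioc {α : Type*} [TopologicalSpace α] [LinearOrder α]
    [OrderClosedTopology α] [MeasurableSpace α] [OpensMeasurableSpace α] (μ : Measure α)
    (S : Set α) {a b c : α} (hab : a ≤ b) (hbc : b ≤ c) :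
    μ (S ∩ Ioc a b) + μ (S ∩ Ioc b c) = μ (S ∩ Ioc a c) := by
  simp only [← Measure.restrict_apply' measurableSet_Ioc]
  rw [← Ioc_union_Ioc_eq_Ioc hab hbc,
    Measure.restrict_union (Ioc_disjoint_Ioc_of_le le_rfl) measurableSet_Ioc, Measure.add_apply]

theorem exists_le_lt_succ_of_le_of_lt {t : ℕ → ℝ} {T : ℝ} {m : ℕ} (h₀ : t 0 ≤ T)
    (hm : T < t m) : ∃ n, t n ≤ T ∧ T < t (n + 1) := by
  by_contra! h
  have hle : ∀ n, t n ≤ T := fun n => Nat.rec h₀ (fun n ih => h n ih) n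
  exact (hm.trans_le (hle m)).false

theorem le_liminf_volume_inter_Icc_div {S : Set ℝ} {a : ℝ}
    (h : ∀ᶠ T in atTop, ENNReal.ofReal (a * T) ≤ volume (S ∩ Icc 0 T)) :
    a ≤ liminf (fun T => (volume (S ∩ Icc 0 T)).toReal / T) atTop := by
  have hfin : ∀ T, volume (S ∩ Icc 0 T) ≠ ⊤ := fun T =>
    ne_top_of_le_ne_top (by simp [Real.volume_Icc]) (measure_mono inter_subset_right)
  have hle_one : ∀ᶠ T in atTop, (volume (S ∩ Icc 0 T)).toReal / T ≤ 1 := by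
    filter_upwards [eventually_gt_atTop 0] with T hT
    rw [div_le_one hT]
    calc (volume (S ∩ Icc 0 T)).toReal ≤ (volume (Icc 0 T)).toReal :=
          ENNReal.toReal_mono (by simp [Real.volume_Icc]) (measure_mono inter_subset_right)
      _ = T := by simp [Real.volume_Icc, hT.le]
  refine le_liminf_of_le (isCoboundedUnder_ge_of_eventually_le atTop hle_one) ?_
  filter_upwards [h, eventually_gt_atTop 0] with T hT hT0
  rw [le_div_iff₀ hT0, ← ENNReal.ofReal_le_iff_le_toReal (hfin T)]
  exact hT

noncomputable def logStep (K t : ℝ) : ℝ := t + K * log t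

section LogWindows

variable {S : Set ℝ} {K c t₀ : ℝ}

theorem add_mul_le_iterate_logStep (hK : 0 ≤ K) (ht₀ : 1 ≤ t₀) (n : ℕ) :
    t₀ + n * (K * log t₀) ≤ (logStep K)^[n] t₀ := by
  induction n with
  | zero => simp
  | succ n ih =>
    have hstep : K * log t₀ ≤ K * log ((logStep K)^[n] t₀) := by
      have : 0 ≤ n * (K * log t₀) := by have := log_nonneg ht₀; positivity
      gcongr
      linarith
    rw [Function.iterate_succ_apply', logStep]
    push_cast
    linarith

theorem le_iterate_logStep (hK : 0 ≤ K) (ht₀ : 1 ≤ t₀) (n : ℕ) : t₀ ≤ (logStep K)^[n] t₀ := by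
  have := add_mul_le_iterate_logStep hK ht₀ n
  have : 0 ≤ n * (K * log t₀) := by have := log_nonneg ht₀; positivity
  linarith

theorem ofReal_le_volume_inter_Ioc_iterate_logStep (hK : 0 ≤ K) (ht₀ : 1 ≤ t₀)
    (hS : ∀ t, t₀ ≤ t →
      ENNReal.ofReal (c * (K * log t)) ≤ volume (S ∩ Ioc t (t + K * log t))) (n : ℕ) :
    ENNReal.ofReal (c * ((logStep K)^[n] t₀ - t₀)) ≤
      volume (S ∩ Ioc t₀ ((logStep K)^[n] t₀)) := by
  induction n with
  | zero => simp
  | succ n ih =>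
    set t := (logStep K)^[n] t₀
    have ht : t₀ ≤ t := le_iterate_logStep hK ht₀ n
    have hstep : 0 ≤ K * log t := mul_nonneg hK (log_nonneg (by linarith))
    rw [Function.iterate_succ_apply', logStep, ← measure_inter_Ioc_add_measure_inter_Ioc _ _ ht
      (by linarith)]
    calc ENNReal.ofReal (c * (t + K * log t - t₀))
        = ENNReal.ofReal (c * (t - t₀) + c * (K * log t)) := by ring_nf
      _ ≤ ENNReal.ofReal (c * (t - t₀)) + ENNReal.ofReal (c * (K * log t)) :=
        ENNReal.ofReal_add_le
      _ ≤ _ := add_le_add ih (hS t ht)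

theorem eventually_ofReal_le_volume_inter_Icc (hK : 0 < K) (hc : 0 ≤ c) (ht₀ : 1 < t₀)
    (hS : ∀ t, t₀ ≤ t →
      ENNReal.ofReal (c * (K * log t)) ≤ volume (S ∩ Ioc t (t + K * log t))) :
    ∀ᶠ T in atTop, ENNReal.ofReal (c / 2 * T) ≤ volume (S ∩ Icc 0 T) := by
  set t : ℕ → ℝ := fun n => (logStep K)^[n] t₀
  have hlog_t₀ : 0 < K * log t₀ := mul_pos hK (log_pos ht₀)
  have hlog_o : ∀ᶠ T in atTop, K * log T ≤ T / 4 := by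
    filter_upwards [isLittleO_log_id_atTop.bound (by positivity : 0 < 1 / (4 * K)),
      eventually_ge_atTop 1] with T hT hT1
    rw [id, norm_of_nonneg (log_nonneg hT1), norm_of_nonneg (by linarith)] at hT
    calc K * log T ≤ K * (1 / (4 * K) * T) := by gcongr
      _ = T / 4 := by field_simp
  filter_upwards [eventually_ge_atTop (4 * t₀), hlog_o] with T hT₀ hKT
  have hT : t 0 ≤ T := show t₀ ≤ T by linarith
  obtain ⟨m, hm⟩ := exists_nat_gt ((T - t₀) / (K * log t₀))
  have hTm : T < t m := by
    have := add_mul_le_iterate_logStep hK.le ht₀.le m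
    rw [div_lt_iff₀ hlog_t₀] at hm
    simp only [t]; linarith
  obtain ⟨n, htn, hTn⟩ := exists_le_lt_succ_of_le_of_lt hT hTm
  have hn : t₀ ≤ t n := le_iterate_logStep hK.le ht₀.le n
  have hgap : T / 2 ≤ t n - t₀ := by
    have : K * log (t n) ≤ K * log T := by gcongr; linarith
    simp only [t, Function.iterate_succ_apply', logStep] at hTn
    linarith
  calc ENNReal.ofReal (c / 2 * T) ≤ ENNReal.ofReal (c * (t n - t₀)) :=
        ENNReal.ofReal_le_ofReal (by nlinarith)
    _ ≤ volume (S ∩ Ioc t₀ (t n)) := ofReal_le_volume_inter_Ioc_iterate_logStep hK.le ht₀.le hS n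
    _ ≤ volume (S ∩ Icc 0 T) := measure_mono (inter_subset_inter_right _
        (Ioc_subset_Icc_self.trans (Icc_subset_Icc (by linarith) htn)))

end LogWindows

theorem ofReal_mul_log_le_volume_inter_Ioc {δ : ℝ → ℝ} (hpos : ∀ s, 0 ≤ s → 0 < δ s)
    (hlip : ∀ s, 0 ≤ s → ∀ u, 0 ≤ u → |log (δ s) - log (δ u)| ≤ |s - u|) {ε M t u : ℝ}
    (hε₀ : 0 ≤ ε) (hε₂ : ε ≤ 2) (ht : 1 ≤ t) (hu : u ∈ Icc t (t + M * log t))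
    (hδu : u ^ (-(1 / 2 : ℝ) + ε) < δ u) :
    ENNReal.ofReal (ε / 2 * log t) ≤
      volume ({s | s ^ (-(1 / 2 : ℝ) + ε / 4) < δ s} ∩ Ioc t (t + (M + 1) * log t)) := by
  have hu₀ : 0 < u := by linarith [hu.1]
  have hlog_t : 0 ≤ log t := log_nonneg ht
  have hlog_tu : log t ≤ log u := log_le_log (by linarith) hu.1
  calc ENNReal.ofReal (ε / 2 * log t) = volume (Ioc u (u + ε / 2 * log t)) := by simp
    _ ≤ _ := by
      refine measure_mono fun s hs => ⟨?_, by linarith [hu.1, hs.1], by nlinarith [hu.2, hs.2]⟩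
      refine rpow_lt_of_abs_log_sub_le (hpos s (by linarith [hs.1])) (hlip s (by linarith [hs.1])
        u hu₀.le) (by linarith) hu₀ hδu hs.1.le ?_
      nlinarith [hs.2]

theorem stmt12 (δ : ℝ → ℝ) (hpos : ∀ t : ℝ, 0 ≤ t → 0 < δ t)
    (M ε t₀ : ℝ) (hM : 1 ≤ M) (hε : ε ∈ Set.Ioo (0 : ℝ) (1 / 8)) (ht₀ : 2 ≤ t₀)
    (hrec : ∀ t : ℝ, t₀ ≤ t →
      ∃ u ∈ Set.Icc t (t + M * Real.log t), u ^ (-(1/2 : ℝ) + ε) < δ u)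
    (hlip : ∀ s : ℝ, 0 ≤ s → ∀ u : ℝ, 0 ≤ u →
      |Real.log (δ s) - Real.log (δ u)| ≤ |s - u|) :
    0 < Filter.liminf
      (fun T : ℝ =>
        (volume ({s : ℝ | s ^ (-(1/2 : ℝ) + ε / 4) < δ s} ∩ Set.Icc 0 T)).toReal / T)
      Filter.atTop := by
  obtain ⟨hε₀, hε₈⟩ := hε
  have hK : 0 < M + 1 := by linarith
  have hwindow : ∀ t, t₀ ≤ t → ENNReal.ofReal (ε / (2 * (M + 1)) * ((M + 1) * log t)) ≤
      volume ({s | s ^ (-(1 / 2 : ℝ) + ε / 4) < δ s} ∩ Ioc t (t + (M + 1) * log t)) := by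
    intro t ht
    obtain ⟨u, hu, hδu⟩ := hrec t ht
    convert ofReal_mul_log_le_volume_inter_Ioc hpos hlip hε₀.le (by linarith) (by linarith) hu hδu
      using 2
    field_simp
  refine lt_of_lt_of_le (by positivity) (le_liminf_volume_inter_Icc_div
    (eventually_ofReal_le_volume_inter_Icc hK (by positivity) (by linarith) hwindow))
end

section
/- Let a_k = ⌈k (log k)²⌉ for k ≥ 2 and define q_0 = 1, q_1 = a_1, q_{k+1} = a_{k+1} q_k + q_{k−1}. Then q_k > 2^k for all sufficiently large k, and limsup_{k→∞} log(a_k) / log(log q_{k−1}) ≤ 1. -/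
open Filter

private lemma log_le_two_sqrt {t : ℝ} (ht : 0 < t) : Real.log t ≤ 2 * Real.sqrt t := by
  have h1 := Real.log_le_sub_one_of_pos (Real.sqrt_pos.mpr ht)
  rw [Real.log_sqrt ht.le] at h1
  nlinarith [Real.sqrt_nonneg t]

private lemma neg_one_le_log_log_two : (-1 : ℝ) ≤ Real.log (Real.log 2) := by
  rw [Real.le_log_iff_exp_le (Real.log_pos one_lt_two)]
  have h1 : (2 : ℝ) ≤ Real.exp 1 := by nlinarith [Real.exp_one_gt_d9]
  have h2 : Real.exp (-1) ≤ 1/2 := by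
    rw [Real.exp_neg]
    rw [inv_le_comm₀ (Real.exp_pos 1) (by norm_num)]
    simpa [one_div] using h1
  nlinarith [Real.log_two_gt_d9]

theorem stmt14 (a q : ℕ → ℕ)
    (ha : ∀ k : ℕ, 2 ≤ k → (a k : ℤ) = ⌈(k : ℝ) * Real.log k ^ 2⌉)
    (hq0 : q 0 = 1) (hq1 : q 1 = a 1)
    (hqrec : ∀ k : ℕ, q (k + 2) = a (k + 2) * q (k + 1) + q k) :
    (∃ K : ℕ, ∀ k : ℕ, K ≤ k → 2 ^ k < q k) ∧
      Filter.limsup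
        (fun k : ℕ => Real.log (a k) / Real.log (Real.log (q (k - 1)))) Filter.atTop ≤ 1 := by
  -- log 3 > 1
  have hlog3 : (1:ℝ) < Real.log 3 := by
    rw [Real.lt_log_iff_exp_lt (by norm_num)]
    nlinarith [Real.exp_one_lt_d9]
  -- a k ≥ k + 1 for k ≥ 3
  have hak : ∀ k : ℕ, 3 ≤ k → k + 1 ≤ a k := by
    intro k hk
    have hk3 : (3:ℝ) ≤ (k:ℝ) := by exact_mod_cast hk
    have hlk : (1:ℝ) < Real.log k :=
      lt_of_lt_of_le hlog3 (Real.log_le_log (by norm_num) hk3)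
    have hsq : (1:ℝ) < Real.log k ^ 2 := by nlinarith
    have hx : (k:ℝ) < (k:ℝ) * Real.log k ^ 2 := by nlinarith
    have h1 : (k:ℤ) < (a k : ℤ) := by
      rw [ha k (by omega), Int.lt_ceil]
      push_cast
      exact hx
    omega
  have hq2 : 1 ≤ q 2 := by
    have h := hqrec 0
    norm_num at h
    omega
  have hq3 : 4 ≤ q 3 := by
    have h := hqrec 1
    norm_num at h
    have h3 := hak 3 (by norm_num)
    have hm : 4 * 1 ≤ a 3 * q 2 := Nat.mul_le_mul (by omega) hq2
    omega
  have hq4 : 2 ^ 4 < q 4 := by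
    have h := hqrec 2
    norm_num at h
    have h4 := hak 4 (by norm_num)
    have hm : 5 * 4 ≤ a 4 * q 3 := Nat.mul_le_mul (by omega) hq3
    omega
  have key : ∀ k : ℕ, 4 ≤ k → 2 ^ k < q k := by
    intro k hk
    induction k, hk using Nat.le_induction with
    | base => exact hq4
    | succ n hn ih =>
      obtain ⟨m, rfl⟩ : ∃ m, n = m + 2 := ⟨n - 2, by omega⟩
      have hr := hqrec (m + 1)
      have e1 : m + 1 + 2 = m + 3 := by omega
      have e2 : m + 1 + 1 = m + 2 := by omega
      rw [e1, e2] at hr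
      have ha' := hak (m + 3) (by omega)
      have h2 : 2 * q (m + 2) ≤ q (m + 3) := by
        have hm : 2 * q (m + 2) ≤ a (m + 3) * q (m + 2) :=
          Nat.mul_le_mul (by omega) (le_refl _)
        omega
      calc 2 ^ (m + 2 + 1) = 2 * 2 ^ (m + 2) := by ring
        _ < 2 * q (m + 2) := by omega
        _ ≤ q (m + 3) := h2
  refine ⟨⟨4, key⟩, ?_⟩
  -- Part 2
  have hlogTop : Tendsto (fun k : ℕ => Real.log k) atTop atTop :=
    Real.tendsto_log_atTop.comp tendsto_natCast_atTop_atTop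
  -- denominator lower bound
  have hDbound : ∀ᶠ k : ℕ in atTop,
      Real.log k - 2 ≤ Real.log (Real.log (q (k - 1))) := by
    filter_upwards [eventually_ge_atTop 5] with k hk5
    obtain ⟨j, rfl⟩ : ∃ j, k = j + 1 := ⟨k - 1, by omega⟩
    have e0 : j + 1 - 1 = j := by omega
    rw [e0]
    have hqj : 2 ^ j < q j := key j (by omega)
    have hcast : ((2:ℝ)) ^ j ≤ (q j : ℝ) := by exact_mod_cast hqj.le
    have h1 : (j:ℝ) * Real.log 2 ≤ Real.log (q j) := by
      rw [← Real.log_pow]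
      exact Real.log_le_log (by positivity) hcast
    have hj4 : (4:ℝ) ≤ (j:ℝ) := by exact_mod_cast (by omega : 4 ≤ j)
    have hlog2pos : (0:ℝ) < Real.log 2 := Real.log_pos one_lt_two
    have h2 : (0:ℝ) < (j:ℝ) * Real.log 2 := by positivity
    have h3 : Real.log ((j:ℝ) * Real.log 2) ≤ Real.log (Real.log (q j)) :=
      Real.log_le_log h2 (le_trans h1 (le_refl _)) |>.trans_eq rfl
    have h4 : Real.log ((j:ℝ) * Real.log 2) = Real.log j + Real.log (Real.log 2) :=
      Real.log_mul (by positivity) (ne_of_gt hlog2pos)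
    have h6 : Real.log ((j:ℝ) + 1) - 1 ≤ Real.log j := by
      have hle : ((j:ℝ) + 1) ≤ 2 * j := by linarith
      have := Real.log_le_log (by positivity) hle
      rw [Real.log_mul (by norm_num) (by positivity)] at this
      have hl2 : Real.log 2 < 1 := by nlinarith [Real.log_two_lt_d9]
      linarith
    have h7 : Real.log ((j + 1 : ℕ) : ℝ) = Real.log ((j:ℝ) + 1) := by norm_num
    rw [h7]
    linarith [neg_one_le_log_log_two, h3, h4.symm.le, h4.le]
  -- numerator upper bound
  have hNbound : ∀ᶠ k in atTop,
      Real.log (a k) ≤ Real.log 2 + Real.log k + 2 * Real.log (Real.log k) := by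
    filter_upwards [eventually_ge_atTop 3, hlogTop.eventually_ge_atTop 2] with k hk3 hlk
    have hkpos : (0:ℝ) < (k:ℝ) := by exact_mod_cast (by omega : 0 < k)
    set x : ℝ := (k:ℝ) * Real.log k ^ 2 with hxdef
    have hx1 : (1:ℝ) ≤ x := by
      have : (3:ℝ) ≤ (k:ℝ) := by exact_mod_cast hk3
      nlinarith
    have haR : (a k : ℝ) = ((⌈x⌉ : ℤ) : ℝ) := by exact_mod_cast ha k (by omega)
    have hub : (a k : ℝ) ≤ 2 * x := by
      rw [haR]
      have := Int.ceil_lt_add_one x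
      linarith
    have hpos : (0:ℝ) < (a k : ℝ) := by
      rw [haR]
      have := Int.le_ceil x
      linarith
    have h1 : Real.log (a k) ≤ Real.log (2 * x) := Real.log_le_log hpos hub
    rw [hxdef, Real.log_mul (by norm_num) (by positivity),
      Real.log_mul (ne_of_gt hkpos) (by positivity), Real.log_pow] at h1
    push_cast at h1
    linarith
  -- nonnegativity / coboundedness
  have hco : IsCoboundedUnder (· ≤ ·) atTop
      (fun k : ℕ => Real.log (a k) / Real.log (Real.log (q (k - 1)))) := by
    apply isCoboundedUnder_le_of_eventually_le atTop (x := 0)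
    filter_upwards [hDbound, hlogTop.eventually_ge_atTop 3] with k hD ht3
    exact div_nonneg (Real.log_natCast_nonneg _) (by linarith)
  -- eventual bound by 1 + ε
  have hub : ∀ ε : ℝ, 0 < ε → ε ≤ 1 → ∀ᶠ k in atTop,
      Real.log (a k) / Real.log (Real.log (q (k - 1))) ≤ 1 + ε := by
    intro ε hε hε1
    filter_upwards [hDbound, hNbound, hlogTop.eventually_ge_atTop 3,
      hlogTop.eventually_ge_atTop ((8 / ε) ^ 2), hlogTop.eventually_ge_atTop (10 / ε)]
      with k hD hN ht3 hs2 h10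
    set t := Real.log k with htdef
    set s := Real.sqrt t with hsdef
    have hs : 8 / ε ≤ s := by
      have := Real.sqrt_le_sqrt hs2
      rwa [Real.sqrt_sq (by positivity)] at this
    have hss : s * s = t := Real.mul_self_sqrt (by linarith)
    have hL : Real.log t ≤ 2 * s := log_le_two_sqrt (by linarith)
    have hDpos : 0 < Real.log (Real.log (q (k - 1))) := by linarith
    rw [div_le_iff₀ hDpos]
    have h8 : 8 ≤ s * ε := (div_le_iff₀ hε).mp hs
    have h10' : 10 ≤ t * ε := (div_le_iff₀ hε).mp h10
    have h8t : 8 * s ≤ ε * t := by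
      have hsnn : 0 ≤ s := Real.sqrt_nonneg _
      nlinarith
    have hl2 : Real.log 2 < 1 := by nlinarith [Real.log_two_lt_d9]
    have keyineq : Real.log 2 + t + 2 * Real.log t ≤ (1 + ε) * (t - 2) := by nlinarith
    have hmul : (1 + ε) * (t - 2) ≤ (1 + ε) * Real.log (Real.log (q (k - 1))) :=
      mul_le_mul_of_nonneg_left hD (by linarith)
    linarith
  refine le_of_forall_pos_le_add fun ε hε => ?_
  have hε' : 0 < min ε 1 := lt_min hε one_pos
  have h1 : Filter.limsup
      (fun k : ℕ => Real.log (a k) / Real.log (Real.log (q (k - 1)))) Filter.atTop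
      ≤ 1 + min ε 1 :=
    Filter.limsup_le_of_le hco (hub _ hε' (min_le_right _ _))
  have := min_le_left ε 1
  linarith
end

section
/- Let a_k and q_k be as in the genus-two example: a_k = ⌈(k+10)(log k)²⌉, q_{k+1} = a_{k+1}q_k + q_{k−1}, q_0 = 1. Then limsup_{k→∞} (1/2)·log(log(q_{k+1}/q_{k−1})) / log(log q_{k−1}) = 0 and limsup_{k→∞} log(√(a_k)) / log(log q_{k−1}) ≤ 1/2. -/
open Filter Topology

set_option maxHeartbeats 1000000 in
theorem stmt15 (a q : ℕ → ℕ)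
    (ha : ∀ k : ℕ, 2 ≤ k → (a k : ℤ) = ⌈((k : ℝ) + 10) * Real.log k ^ 2⌉)
    (hq0 : q 0 = 1) (hq1 : q 1 = a 1)
    (hqrec : ∀ k : ℕ, q (k + 2) = a (k + 2) * q (k + 1) + q k) :
    Filter.limsup
        (fun k : ℕ => (1 / 2) * Real.log (Real.log ((q (k + 1) : ℝ) / (q (k - 1) : ℝ)))
          / Real.log (Real.log (q (k - 1)))) Filter.atTop = 0 ∧
      Filter.limsup
        (fun k : ℕ => Real.log (Real.sqrt (a k)) / Real.log (Real.log (q (k - 1))))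
        Filter.atTop ≤ 1 / 2 := by
  have hexp1 : Real.exp 1 < 2.7182818286 := Real.exp_one_lt_d9
  have hexppos := Real.exp_pos 1
  have hlog3 : (1:ℝ) ≤ Real.log 3 := by
    rw [Real.le_log_iff_exp_le (by norm_num)]
    calc Real.exp 1 ≤ 2.7182818286 := hexp1.le
      _ ≤ 3 := by norm_num
  have hlog13 : (2:ℝ) ≤ Real.log 13 := by
    rw [Real.le_log_iff_exp_le (by norm_num)]
    have h2 : Real.exp 2 = Real.exp 1 * Real.exp 1 := by
      rw [← Real.exp_add]; norm_num
    nlinarith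
  -- lower bound on a
  have ha13 : ∀ k, 3 ≤ k → 13 ≤ a k := by
    intro k hk
    have h2k : (2:ℕ) ≤ k := by omega
    have hk3 : (3:ℝ) ≤ (k:ℝ) := by exact_mod_cast hk
    have hlogk : (1:ℝ) ≤ Real.log k :=
      le_trans hlog3 (Real.log_le_log (by norm_num) hk3)
    have hx : (13:ℝ) ≤ ((k:ℝ) + 10) * Real.log k ^ 2 := by nlinarith
    have h2 : (13:ℤ) ≤ (a k : ℤ) := by
      rw [ha k h2k]
      have := Int.le_ceil (((k:ℝ) + 10) * Real.log k ^ 2)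
      exact_mod_cast hx.trans this
    exact_mod_cast h2
  have ha1 : ∀ k, 2 ≤ k → 1 ≤ a k := by
    intro k hk
    rcases Nat.lt_or_ge k 3 with h | h
    · have hk2 : k = 2 := by omega
      subst hk2
      have hx : (0:ℝ) < ((2:ℕ):ℝ) + 10 := by norm_num
      have hlog2 : (0:ℝ) < Real.log 2 := Real.log_pos (by norm_num)
      have hpos : (0:ℝ) < (((2:ℕ):ℝ) + 10) * Real.log 2 ^ 2 := by positivity
      have h2 : (0:ℤ) < (a 2 : ℤ) := by
        rw [ha 2 (le_refl 2), Int.ceil_pos]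
        have hl2 : (0:ℝ) < Real.log ((2:ℕ):ℝ) := by
          have : ((2:ℕ):ℝ) = 2 := by norm_num
          rw [this]; exact Real.log_pos (by norm_num)
        nlinarith
      have : 0 < a 2 := by exact_mod_cast h2
      omega
    · exact le_trans (by norm_num) (ha13 k h)
  -- upper bound on a
  have haub : ∀ k, 2 ≤ k → (a k : ℝ) ≤ ((k:ℝ) + 10) * Real.log k ^ 2 + 1 := by
    intro k hk
    have h := ha k hk
    have h2 : ((a k : ℤ) : ℝ) < ((k:ℝ) + 10) * Real.log k ^ 2 + 1 := by
      rw [h]; exact Int.ceil_lt_add_one _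
    push_cast at h2
    linarith
  -- nat recurrences
  have hstep : ∀ i, a (i+2) * q (i+1) ≤ q (i+2) := by
    intro i; rw [hqrec i]; omega
  have hmono : ∀ i, q (i+1) ≤ q (i+2) := by
    intro i
    have h1 := ha1 (i+2) (by omega)
    calc q (i+1) = 1 * q (i+1) := (one_mul _).symm
      _ ≤ a (i+2) * q (i+1) := Nat.mul_le_mul_right _ h1
      _ ≤ q (i+2) := hstep i
  have hqlow : ∀ i, 13 ^ i ≤ q (i+2) := by
    intro i
    induction i with
    | zero => rw [hqrec 0, hq0]; omega
    | succ n ih =>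
      have h13 := ha13 (n+3) (by omega)
      calc 13 ^ (n+1) = 13 * 13 ^ n := by ring
        _ ≤ a (n+3) * q (n+2) := Nat.mul_le_mul h13 ih
        _ ≤ q (n+3) := hstep (n+1)
  have hup1 : ∀ i, 1 ≤ i → q (i+2) ≤ (a (i+2) + 1) * q (i+1) := by
    intro i hi
    obtain ⟨m, rfl⟩ : ∃ m, i = m + 1 := ⟨i - 1, by omega⟩
    rw [hqrec]
    have := hmono m
    nlinarith [this]
  have hup2 : ∀ i, 2 ≤ i → q (i+2) ≤ (a (i+2) + 1) * ((a (i+1) + 1) * q i) := by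
    intro i hi
    calc q (i+2) ≤ (a (i+2) + 1) * q (i+1) := hup1 i (by omega)
      _ ≤ (a (i+2) + 1) * ((a (i+1) + 1) * q i) := by
          apply Nat.mul_le_mul_left
          obtain ⟨m, rfl⟩ : ∃ m, i = m + 1 := ⟨i - 1, by omega⟩
          exact hup1 m (by omega)
  have hlow2 : ∀ i, a (i+1) * a (i+2) * q i ≤ q (i+2) := by
    intro i
    calc a (i+1) * a (i+2) * q i = a (i+2) * (a (i+1) * q i) := by ring
      _ ≤ a (i+2) * q (i+1) := by
          apply Nat.mul_le_mul_left
          rcases Nat.eq_zero_or_pos i with h | h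
          · subst h; simp [hq0, hq1]
          · obtain ⟨m, rfl⟩ : ∃ m, i = m + 1 := ⟨i - 1, by omega⟩
            exact hstep m
      _ ≤ q (i+2) := hstep i
  -- tendsto facts
  have hlogT : Tendsto (fun k : ℕ => Real.log k) atTop atTop :=
    Real.tendsto_log_atTop.comp tendsto_natCast_atTop_atTop
  have hll : Tendsto (fun k : ℕ => Real.log (Real.log k) / Real.log k) atTop (𝓝 0) := by
    have h := Real.isLittleO_log_id_atTop.tendsto_div_nhds_zero
    exact h.comp hlogT
  have hc12 : Tendsto (fun k : ℕ => Real.log 12 / Real.log k) atTop (𝓝 0) :=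
    tendsto_const_nhds.div_atTop hlogT
  -- bound functions
  set U : ℕ → ℝ := fun k => 1/2 * (Real.log 12 / Real.log k)
      + 1/2 * (Real.log (Real.log k) / Real.log k) with hUdef
  set V : ℕ → ℝ := fun k => 1/2 + 3/2 * (Real.log (Real.log k) / Real.log k) with hVdef
  have hU : Tendsto U atTop (𝓝 0) := by
    rw [hUdef]
    have h0 : (0:ℝ) = 1/2 * 0 + 1/2 * 0 := by norm_num
    rw [h0]
    exact ((hc12.const_mul (1/2:ℝ)).add (hll.const_mul (1/2:ℝ)))
  have hV : Tendsto V atTop (𝓝 (1/2)) := by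
    rw [hVdef]
    have h : Tendsto (fun k : ℕ => 1/2 + 3/2 * (Real.log (Real.log k) / Real.log k))
        atTop (𝓝 (1/2 + 3/2 * 0)) := tendsto_const_nhds.add (hll.const_mul _)
    simpa using h
  -- the key eventual bounds
  have hkey : ∀ᶠ k : ℕ in atTop,
      (0 ≤ (1 / 2) * Real.log (Real.log ((q (k + 1) : ℝ) / (q (k - 1) : ℝ)))
          / Real.log (Real.log (q (k - 1)))
        ∧ (1 / 2) * Real.log (Real.log ((q (k + 1) : ℝ) / (q (k - 1) : ℝ)))
          / Real.log (Real.log (q (k - 1))) ≤ U k)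
      ∧ (0 ≤ Real.log (Real.sqrt (a k)) / Real.log (Real.log (q (k - 1)))
        ∧ Real.log (Real.sqrt (a k)) / Real.log (Real.log (q (k - 1))) ≤ V k) := by
    filter_upwards [eventually_ge_atTop 20] with k hk
    obtain ⟨j, rfl⟩ : ∃ j, k = j + 1 := ⟨k - 1, by omega⟩
    have hj : (19:ℕ) ≤ j := by omega
    have hsub : j + 1 - 1 = j := by omega
    rw [hsub]
    have hkR : (20:ℝ) ≤ ((j:ℝ) + 1) := by
      have : (20:ℝ) ≤ ((j+1 : ℕ):ℝ) := by exact_mod_cast hk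
      push_cast at this; linarith
    -- cast basics
    have hqj_low : ((13:ℝ)) ^ (j - 2) ≤ (q j : ℝ) := by
      have h := hqlow (j - 2)
      have hje : j - 2 + 2 = j := by omega
      rw [hje] at h
      exact_mod_cast h
    have hqj_pos : (0:ℝ) < (q j : ℝ) := lt_of_lt_of_le (by positivity) hqj_low
    -- log q j ≥ j+1
    have hlogq : ((j:ℝ) + 1) ≤ Real.log (q j) := by
      have h1 : Real.log ((13:ℝ) ^ (j - 2)) ≤ Real.log (q j) :=
        Real.log_le_log (by positivity) hqj_low
      rw [Real.log_pow] at h1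
      have h2 : ((j:ℝ) + 1) ≤ ((j - 2 : ℕ):ℝ) * Real.log 13 := by
        have hcast : ((j - 2 : ℕ):ℝ) = (j:ℝ) - 2 := by
          have : (2:ℕ) ≤ j := by omega
          push_cast [Nat.cast_sub this]; ring
        rw [hcast]
        have hjR : (19:ℝ) ≤ (j:ℝ) := by exact_mod_cast hj
        nlinarith
      linarith
    have hlogq_pos : (0:ℝ) < Real.log (q j) := by linarith
    -- L := log log q j  ≥ log (j+1) > 0
    have hlogk_pos : (0:ℝ) < Real.log ((j:ℝ) + 1) := by
      apply Real.log_pos; linarith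
    have hL : Real.log ((j:ℝ) + 1) ≤ Real.log (Real.log (q j)) :=
      Real.log_le_log (by linarith) hlogq
    have hL_pos : (0:ℝ) < Real.log (Real.log (q j)) := lt_of_lt_of_le hlogk_pos hL
    -- bounds on a at j+1 and j+2
    have haR : ∀ i : ℕ, 20 ≤ i → (a i : ℝ) + 1 ≤ (i:ℝ)^4 := by
      intro i hi
      have h1 := haub i (by omega)
      have hiR : (20:ℝ) ≤ (i:ℝ) := by exact_mod_cast hi
      have hlogle : Real.log i ≤ (i:ℝ) := Real.log_le_self (by linarith)
      have hlognn : 0 ≤ Real.log (i:ℝ) := Real.log_natCast_nonneg i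
      have hL2 : Real.log i ^ 2 ≤ (i:ℝ)^2 := by nlinarith
      have h3 : ((i:ℝ)+10) * Real.log i ^ 2 ≤ ((i:ℝ)+10) * (i:ℝ)^2 := by nlinarith
      have h4 : ((i:ℝ)+10) * (i:ℝ)^2 + 2 ≤ (i:ℝ)^4 := by nlinarith
      linarith
    -- ratio R := q (j+2) / q j
    have hRup : (q (j+2) : ℝ) ≤ ((j:ℝ)+1)^12 * (q j : ℝ) := by
      have h := hup2 j (by omega)
      have hcast : (q (j+2) : ℝ) ≤ ((a (j+2) : ℝ) + 1) * (((a (j+1) : ℝ) + 1) * (q j : ℝ)) := by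
        exact_mod_cast h
      have h1 : ((a (j+2) : ℝ) + 1) ≤ ((j:ℝ)+2)^4 := by
        have := haR (j+2) (by omega); push_cast at this ⊢; linarith
      have h2 : ((a (j+1) : ℝ) + 1) ≤ ((j:ℝ)+1)^4 := by
        have := haR (j+1) (by omega); push_cast at this ⊢; linarith
      have hjR : (19:ℝ) ≤ (j:ℝ) := by exact_mod_cast hj
      have h3 : ((j:ℝ)+2)^4 ≤ (((j:ℝ)+1)^2)^4 := by
        apply pow_le_pow_left₀ (by positivity)
        nlinarith
      have ha2nn : (0:ℝ) ≤ (a (j+2) : ℝ) + 1 := by positivity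
      have ha1nn : (0:ℝ) ≤ (a (j+1) : ℝ) + 1 := by positivity
      calc (q (j+2) : ℝ) ≤ ((a (j+2) : ℝ) + 1) * (((a (j+1) : ℝ) + 1) * (q j : ℝ)) := hcast
        _ ≤ (((j:ℝ)+1)^2)^4 * (((j:ℝ)+1)^4 * (q j : ℝ)) := by
            apply mul_le_mul (le_trans h1 h3) _ (by positivity) (by positivity)
            exact mul_le_mul_of_nonneg_right h2 hqj_pos.le
        _ = ((j:ℝ)+1)^12 * (q j : ℝ) := by ring
    have hRlow : (169:ℝ) * (q j : ℝ) ≤ (q (j+2) : ℝ) := by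
      have h := hlow2 j
      have h1 := ha13 (j+1) (by omega)
      have h2 := ha13 (j+2) (by omega)
      have : (169:ℕ) * q j ≤ a (j+1) * a (j+2) * q j := by
        apply Nat.mul_le_mul_right
        calc (169:ℕ) = 13 * 13 := by norm_num
          _ ≤ a (j+1) * a (j+2) := Nat.mul_le_mul h1 h2
      exact_mod_cast le_trans this h
    set R : ℝ := (q (j+2) : ℝ) / (q j : ℝ) with hRdef
    have hR169 : (169:ℝ) ≤ R := by
      rw [hRdef, le_div_iff₀ hqj_pos]; linarith
    have hRk : R ≤ ((j:ℝ)+1)^12 := by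
      rw [hRdef, div_le_iff₀ hqj_pos]; exact hRup
    have hlogR_low : (1:ℝ) ≤ Real.log R := by
      have : Real.log 169 ≤ Real.log R := Real.log_le_log (by norm_num) hR169
      have h169 : (1:ℝ) ≤ Real.log 169 := by
        rw [Real.le_log_iff_exp_le (by norm_num)]
        calc Real.exp 1 ≤ 2.7182818286 := hexp1.le
          _ ≤ 169 := by norm_num
      linarith
    have hlogR_up : Real.log R ≤ 12 * Real.log ((j:ℝ)+1) := by
      have h := Real.log_le_log (by linarith : (0:ℝ) < R) hRk
      rwa [Real.log_pow, Nat.cast_ofNat] at h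
    have hloglogR_low : (0:ℝ) ≤ Real.log (Real.log R) := Real.log_nonneg hlogR_low
    have hloglogR_up : Real.log (Real.log R) ≤ Real.log 12 + Real.log (Real.log ((j:ℝ)+1)) := by
      have h1 : Real.log (Real.log R) ≤ Real.log (12 * Real.log ((j:ℝ)+1)) :=
        Real.log_le_log (by linarith) hlogR_up
      rwa [Real.log_mul (by norm_num) (ne_of_gt hlogk_pos)] at h1
    -- assemble part 1 bounds
    have hsub2 : (j:ℝ) + 1 + 1 = (j:ℝ) + 2 := by ring
    constructor
    · constructor
      · positivity
      · have hnum : (1/2) * Real.log (Real.log R) ≤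
            (1/2) * (Real.log 12 + Real.log (Real.log ((j:ℝ)+1))) := by linarith
        have h12nn : (0:ℝ) ≤ Real.log 12 := Real.log_nonneg (by norm_num)
        have hlogj2 : (2:ℝ) ≤ Real.log ((j:ℝ)+1) :=
          le_trans hlog13 (Real.log_le_log (by norm_num) (by linarith))
        have hllnn : (0:ℝ) ≤ Real.log (Real.log ((j:ℝ)+1)) := Real.log_nonneg (by linarith)
        have hdiv : (1/2) * Real.log (Real.log R) / Real.log (Real.log (q j))
            ≤ (1/2) * (Real.log 12 + Real.log (Real.log ((j:ℝ)+1))) / Real.log ((j:ℝ)+1) := by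
          apply div_le_div₀ (by linarith) hnum hlogk_pos hL
        refine hdiv.trans (le_of_eq ?_)
        have hcast : ((j+1:ℕ):ℝ) = (j:ℝ)+1 := by push_cast; ring
        simp only [hUdef, hcast]
        ring
    · -- part 2 bounds
      have ha13' : (13:ℝ) ≤ (a (j+1) : ℝ) := by exact_mod_cast ha13 (j+1) (by omega)
      have hsqrt : Real.log (Real.sqrt (a (j+1))) = Real.log (a (j+1)) / 2 :=
        Real.log_sqrt (by positivity)
      have hloga_nn : (0:ℝ) ≤ Real.log (a (j+1)) := Real.log_nonneg (by linarith)
      constructor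
      · rw [hsqrt]
        positivity
      · rw [hsqrt]
        set x : ℝ := (j:ℝ) + 1 with hxdef
        set t : ℝ := Real.log x with htdef
        have hx20 : (20:ℝ) ≤ x := hkR
        have ht2 : (2:ℝ) ≤ t := by
          rw [htdef]
          calc (2:ℝ) ≤ Real.log 13 := hlog13
            _ ≤ Real.log x := Real.log_le_log (by norm_num) (by linarith)
        have ht0 : t ≠ 0 := by intro h; rw [h] at ht2; norm_num at ht2
        have hbound : (a (j+1) : ℝ) ≤ x * t ^ 3 := by
          have h1 := haub (j+1) (by omega)
          have hcast : ((j+1:ℕ):ℝ) = x := by rw [hxdef]; push_cast; ring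
          rw [hcast, ← htdef] at h1
          have h5 : (x - 10) ≤ x*t - x - 10 := by nlinarith
          have h6 : (4:ℝ) ≤ t^2 := by nlinarith
          nlinarith [mul_le_mul h6 h5 (by linarith : (0:ℝ) ≤ x - 10)
            (by positivity : (0:ℝ) ≤ t^2)]
        have hltnn : (0:ℝ) ≤ Real.log t := Real.log_nonneg (by linarith)
        have hA : Real.log (a (j+1)) ≤ t + 3 * Real.log t := by
          have h2 : Real.log (a (j+1)) ≤ Real.log (x * t ^ 3) :=
            Real.log_le_log (by linarith) hbound
          rw [Real.log_mul (by linarith) (pow_ne_zero 3 ht0), Real.log_pow, ← htdef] at h2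
          push_cast at h2
          linarith
        have hdiv : Real.log (a (j+1)) / 2 / Real.log (Real.log (q j))
            ≤ (t + 3 * Real.log t) / 2 / t := by
          apply div_le_div₀ (by linarith) (by linarith) hlogk_pos hL
        refine hdiv.trans (le_of_eq ?_)
        have hcast : ((j+1:ℕ):ℝ) = x := by rw [hxdef]; push_cast; ring
        simp only [hVdef, hcast, ← htdef]
        field_simp
  constructor
  · have ht : Tendsto (fun k : ℕ => (1 / 2) * Real.log (Real.log ((q (k + 1) : ℝ) / (q (k - 1) : ℝ)))
          / Real.log (Real.log (q (k - 1)))) atTop (𝓝 0) :=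
      squeeze_zero' (hkey.mono fun k h => h.1.1) (hkey.mono fun k h => h.1.2) hU
    exact ht.limsup_eq
  · have hle := Filter.limsup_le_limsup (f := (atTop : Filter ℕ))
      (hkey.mono fun k h => h.2.2)
      (isCoboundedUnder_le_of_eventually_le atTop (hkey.mono fun k h => h.2.1))
      (hV.isBoundedUnder_le)
    calc Filter.limsup (fun k : ℕ => Real.log (Real.sqrt (a k)) / Real.log (Real.log (q (k - 1))))
          atTop ≤ Filter.limsup V atTop := hle
      _ = 1/2 := hV.limsup_eq
end
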